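/- The semiring Z₈ satisfies the identity u ≈ v if and only if for every nonempty set A of variables, the number of entries u_i of u with c(u_i) ⊆ A is odd exactly when the number of entries v_j of v with c(v_j) ⊆ A is odd. -/
import Mathlib


/-- The value in `Bool` (under multiplication `mul` and assignment `φ`) of a word,
i.e. a nonempty list of variables: the product of the images of its letters, in order.
(The value `false` on the empty list is junk; words are required to be nonempty.) -/
def wordVal (mul : Bool → Bool → Bool) (φ : ℕ → Bool) : List ℕ → Bool
  | [] => false
  | a :: rest => rest.foldl (fun acc x => mul acc (φ x)) (φ a)

/-- The value of a term, i.e. a nonempty list of words: the sum (under `add`) of the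
values of its entries. (The value `false` on the empty list is junk; terms are
required to be nonempty.) -/
def termVal (add mul : Bool → Bool → Bool) (φ : ℕ → Bool) : List (List ℕ) → Bool
  | [] => false
  | w :: rest => rest.foldl (fun acc q => add acc (wordVal mul φ q)) (wordVal mul φ w)

/-- The two-element semiring on `Bool` with addition `add` and multiplication `mul`
satisfies the identity `u ≈ v`. -/
def Satisfies (add mul : Bool → Bool → Bool) (u v : List (List ℕ)) : Prop :=
  ∀ φ : ℕ → Bool, termVal add mul φ u = termVal add mul φ v

lemma foldl_and (φ : ℕ → Bool) : ∀ (l : List ℕ) (b : Bool),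
    l.foldl (fun acc x => acc && φ x) b = (b && l.all φ) := by
  intro l; induction l with
  | nil => simp
  | cons a t ih => intro b; simp [ih, Bool.and_assoc]

lemma wordVal_eq (φ : ℕ → Bool) (w : List ℕ) (hw : w ≠ []) :
    wordVal (fun x y => x && y) φ w = decide (∀ n ∈ w, φ n = true) := by
  cases w with
  | nil => simp at hw
  | cons a t =>
    show (t.foldl (fun acc x => acc && φ x) (φ a)) = _
    rw [foldl_and, Bool.eq_iff_iff]
    simp [List.all_eq_true]

lemma foldl_xor (f : List ℕ → Bool) : ∀ (l : List (List ℕ)) (b : Bool),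
    l.foldl (fun acc q => xor acc (f q)) b = xor b (decide (Odd (l.countP f))) := by
  intro l; induction l with
  | nil => simp
  | cons q t ih =>
    intro b
    simp only [List.foldl_cons, ih, List.countP_cons]
    by_cases h : f q = true
    · simp [h, Nat.odd_add_one, Bool.xor_assoc]
      rcases Nat.even_or_odd (t.countP f) with he | ho
      · simp [he, Nat.not_odd_iff_even.2 he]
      · simp [ho, Nat.not_even_iff_odd.2 ho]
    · simp [h]

lemma termVal_eq (φ : ℕ → Bool) (u : List (List ℕ)) (hu : u ≠ []) :
    termVal (fun x y => xor x y) (fun x y => x && y) φ u =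
      decide (Odd (u.countP (wordVal (fun x y => x && y) φ))) := by
  cases u with
  | nil => simp at hu
  | cons w t =>
    simp only [termVal, foldl_xor, List.countP_cons]
    by_cases h : wordVal (fun x y => x && y) φ w = true
    · simp [h, Nat.odd_add_one]
      rcases Nat.even_or_odd (t.countP (wordVal (fun x y => x && y) φ)) with he | ho
      · simp [he, Nat.not_odd_iff_even.2 he]
      · simp [ho, Nat.not_even_iff_odd.2 ho]
    · simp [h]

open scoped Classical in
/-- Lemma 1.1(10): `Z₈` (addition `xor`, multiplication `∧`) satisfies `u ≈ v` iff
for every nonempty set `A` of variables, the number of entries of `u` with content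
contained in `A` is odd exactly when the number of such entries of `v` is odd. -/
theorem Z8_satisfies_iff (u v : List (List ℕ))
    (hu : u ≠ []) (hv : v ≠ []) (hu' : ∀ w ∈ u, w ≠ []) (hv' : ∀ w ∈ v, w ≠ []) :
    Satisfies (fun x y => xor x y) (fun x y => x && y) u v ↔
      (∀ A : Set ℕ, A.Nonempty →
        (Odd (u.countP (fun w => decide (∀ n ∈ w, n ∈ A))) ↔
         Odd (v.countP (fun w => decide (∀ n ∈ w, n ∈ A))))) := by
  constructor
  · intro hsat A _
    have φdef : ∀ n, (fun n => decide (n ∈ A)) n = true ↔ n ∈ A := by simp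
    have := hsat (fun n => decide (n ∈ A))
    rw [termVal_eq _ u hu, termVal_eq _ v hv, decide_eq_decide] at this
    have cu : u.countP (wordVal (fun x y => x && y) (fun n => decide (n ∈ A))) =
        u.countP (fun w => decide (∀ n ∈ w, n ∈ A)) :=
      List.countP_congr fun w hw => by
        rw [wordVal_eq _ w (hu' w hw)]; simp
    have cv : v.countP (wordVal (fun x y => x && y) (fun n => decide (n ∈ A))) =
        v.countP (fun w => decide (∀ n ∈ w, n ∈ A)) :=
      List.countP_congr fun w hw => by
        rw [wordVal_eq _ w (hv' w hw)]; simp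
    rwa [cu, cv] at this
  · intro h φ
    rw [termVal_eq φ u hu, termVal_eq φ v hv, decide_eq_decide]
    by_cases hA : ({n | φ n = true} : Set ℕ).Nonempty
    · have cu : u.countP (wordVal (fun x y => x && y) φ) =
          u.countP (fun w => decide (∀ n ∈ w, φ n = true)) :=
        List.countP_congr fun w hw => by rw [wordVal_eq _ w (hu' w hw)]
      have cv : v.countP (wordVal (fun x y => x && y) φ) =
          v.countP (fun w => decide (∀ n ∈ w, φ n = true)) :=
        List.countP_congr fun w hw => by rw [wordVal_eq _ w (hv' w hw)]
      rw [cu, cv]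
      convert h _ hA using 2 <;>
        exact List.countP_congr fun w hw => by simp [Set.mem_setOf_eq]
    · have hφ : ∀ n, φ n = false := by
        intro n
        by_contra hn
        exact hA ⟨n, by simpa [Bool.not_eq_false] using hn⟩
      have cu : u.countP (wordVal (fun x y => x && y) φ) = 0 := by
        rw [List.countP_eq_zero]
        intro w hw
        rw [wordVal_eq _ w (hu' w hw)]
        obtain ⟨a, t, rfl⟩ := List.exists_cons_of_ne_nil (hu' w hw)
        simp [hφ]
        exact ⟨a, fun h => absurd rfl h⟩
      have cv : v.countP (wordVal (fun x y => x && y) φ) = 0 := by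
        rw [List.countP_eq_zero]
        intro w hw
        rw [wordVal_eq _ w (hv' w hw)]
        obtain ⟨a, t, rfl⟩ := List.exists_cons_of_ne_nil (hv' w hw)
        simp [hφ]
        exact ⟨a, fun h => absurd rfl h⟩
      rw [cu, cv]
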